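/- Let ε₁ and ε₂ be independent real-valued random variables with variances v₁ = Var(ε₁) and v₂ = Var(ε₂), and let h, ĥ > 0. Define Var_p1 = h²·v₁ and Var_p2 = h²·(1 - h/(2ĥ))²·v₁ + (h⁴/(4ĥ²))·v₂. If the ratio r = h/ĥ satisfies 1 ≤ r ≤ 4v₁/(v₁ + v₂), then Var_p2 ≤ Var_p1. -/

import Mathlib

open MeasureTheory ProbabilityTheory

/-! In terms of `r = h / ĥ`, `Var_p2 = h² ((1 - r/2)² v₁ + (r²/4) v₂)`, and
`(1 - r/2)² v₁ + (r²/4) v₂ - v₁ = (r/4) (r (v₁ + v₂) - 4 v₁)`, which is `≤ 0` exactly when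
`r ≤ 4 v₁ / (v₁ + v₂)` (for `r ≥ 0`). -/

lemma second_order_coeff_le_of_mul_le {r v₁ v₂ : ℝ} (hr : 0 ≤ r)
    (hrv : r * (v₁ + v₂) ≤ 4 * v₁) :
    (1 - r / 2) ^ 2 * v₁ + r ^ 2 / 4 * v₂ ≤ v₁ := by
  have hdiff : (1 - r / 2) ^ 2 * v₁ + r ^ 2 / 4 * v₂ = v₁ + r / 4 * (r * (v₁ + v₂) - 4 * v₁) := by
    ring
  have hnonpos : r / 4 * (r * (v₁ + v₂) - 4 * v₁) ≤ 0 :=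
    mul_nonpos_of_nonneg_of_nonpos (by positivity) (by linarith)
  linarith

lemma second_order_variance_eq {h hhat v₁ v₂ : ℝ} (hhhat : hhat ≠ 0) :
    h ^ 2 * (1 - h / (2 * hhat)) ^ 2 * v₁ + h ^ 4 / (4 * hhat ^ 2) * v₂
      = h ^ 2 * ((1 - h / hhat / 2) ^ 2 * v₁ + (h / hhat) ^ 2 / 4 * v₂) := by
  field_simp

theorem stmt2_general
    (v₁ v₂ : ℝ)
    (hv₁pos : 0 < v₁) (hv₂pos : 0 < v₂)
    (h hhat : ℝ) (hh : 0 < h) (hhhat : 0 < hhat)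
    (hr₂ : h / hhat ≤ 4 * v₁ / (v₁ + v₂)) :
    h ^ 2 * (1 - h / (2 * hhat)) ^ 2 * v₁ + h ^ 4 / (4 * hhat ^ 2) * v₂
      ≤ h ^ 2 * v₁ := by
  have hr : 0 ≤ h / hhat := div_nonneg hh.le hhhat.le
  have hrv : h / hhat * (v₁ + v₂) ≤ 4 * v₁ := (le_div_iff₀ (by linarith)).mp hr₂
  rw [second_order_variance_eq hhhat.ne']
  exact mul_le_mul_of_nonneg_left (second_order_coeff_le_of_mul_le hr hrv) (sq_nonneg h)

/-- If the step-size ratio `r = h/hhat` lies in `[1, 4v₁/(v₁+v₂)]`, the variance of the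
gradient-based (second-order) perturbation does not exceed that of the first-order one. -/
theorem stmt2 {Ω : Type*} {mΩ : MeasurableSpace Ω} (μ : Measure Ω)
    [IsProbabilityMeasure μ] (ε₁ ε₂ : Ω → ℝ)
    (hindep : IndepFun ε₁ ε₂ μ)
    (v₁ v₂ : ℝ) (hv₁ : v₁ = variance ε₁ μ) (hv₂ : v₂ = variance ε₂ μ)
    (hv₁pos : 0 < v₁) (hv₂pos : 0 < v₂)
    (h hhat : ℝ) (hh : 0 < h) (hhhat : 0 < hhat)
    (hr₁ : 1 ≤ h / hhat) (hr₂ : h / hhat ≤ 4 * v₁ / (v₁ + v₂)) :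
    h ^ 2 * (1 - h / (2 * hhat)) ^ 2 * v₁ + h ^ 4 / (4 * hhat ^ 2) * v₂
      ≤ h ^ 2 * v₁ :=
  stmt2_general v₁ v₂ hv₁pos hv₂pos h hhat hh hhhat hr₂
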